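/- Let θ be a ternary relation on ℕ. For every primitive recursive function g : ℕ → ℕ, there is k ∈ ℕ such that for every n ∈ ℕ, every ω^{n+k}-large*(θ) finite set X ⊆ ℕ contains a g-sparse ω^n-large*(θ) subset. -/
import Mathlib


/-- The minimum of a finite set of naturals (`0` if empty). -/
noncomputable def minN (X : Finset ℕ) : ℕ := sInf (X : Set ℕ)

/-- The maximum of a finite set of naturals (`0` if empty). -/
def maxN (X : Finset ℕ) : ℕ := X.sup id

/-- `E` lies entirely below `F`. -/
def SetBelow (E F : Finset ℕ) : Prop := ∀ x ∈ E, ∀ y ∈ F, x < y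

/-- `E` and `F` are `θ`-apart: for every `x < max E` there is `y < min F`
with `θ x y z` for all `z < max F`. -/
def ThetaApart (θ : ℕ → ℕ → ℕ → Prop) (E F : Finset ℕ) : Prop :=
  ∀ x < maxN E, ∃ y < minN F, ∀ z < maxN F, θ x y z

/-- `L·k`: finite sets containing `k` pairwise `θ`-apart members `X₀ < ⋯ < X_{k-1}` of `L`. -/
def MulK (θ : ℕ → ℕ → ℕ → Prop) (L : Set (Finset ℕ)) (k : ℕ) : Set (Finset ℕ) :=
  {F | ∃ X : Fin k → Finset ℕ, (∀ i, X i ∈ L) ∧ (∀ i, X i ⊆ F) ∧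
    ∀ i j, i < j → SetBelow (X i) (X j) ∧ ThetaApart θ (X i) (X j)}

/-- `L·σ` for a finite sequence `σ`: `L·ε = L`, `L·(k⌢τ) = (L·k)·τ`. -/
def MulSeq (θ : ℕ → ℕ → ℕ → Prop) (L : Set (Finset ℕ)) : List ℕ → Set (Finset ℕ)
  | [] => L
  | k :: τ => MulSeq θ (MulK θ L k) τ

/-- `L^θ_n`: the `ω^n`-large*(θ) finite sets. -/
noncomputable def LargeStar (θ : ℕ → ℕ → ℕ → Prop) : ℕ → Set (Finset ℕ)
  | 0 => {X | X.Nonempty}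
  | n + 1 => {X | X.Nonempty ∧
      X.erase (minN X) ∈ MulSeq θ (LargeStar θ n) (List.replicate (n + 1) (minN X))}

/-- `ω^n`-largeness(θ) (the non-starred notion). -/
noncomputable def LargeTheta (θ : ℕ → ℕ → ℕ → Prop) : ℕ → Set (Finset ℕ)
  | 0 => {X | X.Nonempty}
  | n + 1 => {X | X.Nonempty ∧ X.erase (minN X) ∈ MulK θ (LargeTheta θ n) (minN X)}

/-- `L·k` without θ-apartness (plain largeness product). -/
def MulKPlain (L : Set (Finset ℕ)) (k : ℕ) : Set (Finset ℕ) :=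
  {F | ∃ X : Fin k → Finset ℕ, (∀ i, X i ∈ L) ∧ (∀ i, X i ⊆ F) ∧
    ∀ i j, i < j → SetBelow (X i) (X j)}

/-- Ketonen–Solovay `ω^n`-largeness (no θ). -/
noncomputable def LargePlain : ℕ → Set (Finset ℕ)
  | 0 => {X | X.Nonempty}
  | n + 1 => {X | X.Nonempty ∧ X.erase (minN X) ∈ MulKPlain (LargePlain n) (minN X)}

/-- `g`-sparsity. -/
def GSparse (g : ℕ → ℕ) (X : Finset ℕ) : Prop := ∀ x ∈ X, ∀ y ∈ X, x < y → g x < y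

/-- exp-sparsity. -/
def ExpSparse (X : Finset ℕ) : Prop := ∀ x ∈ X, ∀ y ∈ X, x < y → 4 ^ x < y

/-- `ω^k`-sparsity. -/
def OmegaSparse (k : ℕ) (X : Finset ℕ) : Prop :=
  ∀ x ∈ X, ∀ y ∈ X, x < y → Finset.Ioc x y ∈ LargePlain k


section Helpers
variable {f : ℕ → ℕ}

lemma iter_le_iter_start (hf : ∀ x, x ≤ f x) (n : ℕ) (x : ℕ) : x ≤ f^[n] x := by
  induction n generalizing x with
  | zero => simp
  | succ n ih => rw [Function.iterate_succ_apply]; exact (hf x).trans (ih (f x))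

lemma iter_mono_arg (hm : Monotone f) (n : ℕ) : Monotone (f^[n]) := hm.iterate n

lemma iter_mono_count (hf : ∀ x, x ≤ f x) (hm : Monotone f) {n n' : ℕ} (h : n ≤ n') (x : ℕ) :
    f^[n] x ≤ f^[n'] x := by
  obtain ⟨d, rfl⟩ := Nat.exists_eq_add_of_le h
  rw [Function.iterate_add_apply]
  exact iter_mono_arg hm n (iter_le_iter_start hf d x)

lemma add_le_iter (hf : ∀ x, x + 1 ≤ f x) (n : ℕ) (x : ℕ) : x + n ≤ f^[n] x := by
  induction n generalizing x with
  | zero => simp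
  | succ n ih =>
    rw [Function.iterate_succ_apply]
    have := ih (f x)
    have := hf x
    omega

end Helpers

/-- The growth function associated to largeness levels. -/
def Gf : ℕ → ℕ → ℕ
  | 0, a => a
  | r + 1, a => Gf r ((fun t => Gf r t + 1)^[a - 1] (a + 1))

lemma le_Gf : ∀ r a, a ≤ Gf r a := by
  intro r
  induction r with
  | zero => intro a; simp [Gf]
  | succ r ih =>
    intro a
    have h1 : ∀ x, x ≤ (fun t => Gf r t + 1) x := fun x => (ih x).trans (Nat.le_succ _)
    calc a ≤ a + 1 := Nat.le_succ a
    _ ≤ (fun t => Gf r t + 1)^[a-1] (a+1) := iter_le_iter_start h1 _ _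
    _ ≤ Gf r _ := ih _
    _ = Gf (r+1) a := rfl

lemma Gf_mono : ∀ r, Monotone (Gf r) := by
  intro r
  induction r with
  | zero => exact fun a b h => by simpa [Gf] using h
  | succ r ih =>
    intro a b h
    show Gf r _ ≤ Gf r _
    apply ih
    have hm : Monotone (fun t => Gf r t + 1) := fun x y hxy => by simp [ih hxy]
    have h1 : ∀ x, x ≤ (fun t => Gf r t + 1) x := fun x => (le_Gf r x).trans (Nat.le_succ _)
    calc (fun t => Gf r t + 1)^[a-1] (a+1) ≤ (fun t => Gf r t + 1)^[b-1] (a+1) :=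
      iter_mono_count h1 hm (by omega) _
    _ ≤ (fun t => Gf r t + 1)^[b-1] (b+1) := iter_mono_arg hm _ (by omega)

lemma Gf_succ_le (r a : ℕ) : Gf r a ≤ Gf (r+1) a := by
  have h1 : ∀ x, x ≤ (fun t => Gf r t + 1) x := fun x => (le_Gf _ x).trans (Nat.le_succ _)
  calc Gf r a ≤ Gf r ((fun t => Gf r t + 1)^[a-1] (a+1)) := by
        apply Gf_mono
        exact le_trans (by omega) (iter_le_iter_start h1 _ _)
  _ = Gf (r+1) a := rfl

lemma Gf_level_mono : ∀ {r r'}, r ≤ r' → ∀ a, Gf r a ≤ Gf r' a := by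
  intro r r' h a
  obtain ⟨d, rfl⟩ := Nat.exists_eq_add_of_le h
  induction d with
  | zero => exact le_rfl
  | succ d ih => exact (ih (by omega)).trans (Gf_succ_le (r+d) a)

lemma Gf_double (r : ℕ) {t : ℕ} (ht : 1 ≤ t) : Gf r (2*t) ≤ Gf (r+1) t := by
  show Gf r (2*t) ≤ Gf r _
  apply Gf_mono
  have h1 : ∀ x, x + 1 ≤ (fun t => Gf r t + 1) x := fun x => by simp [le_Gf r x]
  have := add_le_iter h1 (t-1) (t+1)
  omega

lemma ack_lt_Gf : ∀ q, ∀ t, 2 ≤ t → ack q t < Gf (2*q+2) t := by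
  intro q
  induction q with
  | zero =>
    intro t ht
    have h1 : ∀ x, x + 1 ≤ (fun u => Gf 0 u + 1) x := fun x => by simp [Gf]
    have hit := add_le_iter h1 (t-1) (t+1)
    have he : Gf 1 t = (fun u => Gf 0 u + 1)^[t-1] (t+1) := by simp [Gf]
    have h2 : Gf 1 t ≤ Gf 2 t := Gf_succ_le 1 t
    show ack 0 t < Gf (2*0+2) t
    simp only [ack_zero, show 2*0+2 = 2 from rfl]
    omega
  | succ q ih =>
    intro t ht
    set s : ℕ → ℕ := fun x => Gf (2*q+2) x + 1 with hs
    have hs1 : ∀ x, x + 1 ≤ s x := fun x => by simp [hs, le_Gf]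
    have hQ : ∀ j u, 2 ≤ u → ack (q+1) j < s^[j+1] u := by
      intro j
      induction j with
      | zero =>
        intro u hu
        have h1 : ack q u < Gf (2*q+2) u := ih u hu
        have h2 : ack q 1 ≤ ack q u := ack_mono_right q (by omega)
        rw [ack_succ_zero]
        simp only [Nat.zero_add, Function.iterate_one, hs]
        omega
      | succ j ihj =>
        intro u hu
        have hw := ihj u hu
        have hwge : u + (j+1) ≤ s^[j+1] u := add_le_iter hs1 (j+1) u
        have hw2 : 2 ≤ s^[j+1] u := by omega
        have h3 : ack q (s^[j+1] u) < Gf (2*q+2) (s^[j+1] u) := ih _ hw2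
        have h4 : ack q (ack (q+1) j) ≤ ack q (s^[j+1] u) := ack_mono_right q (by omega)
        rw [ack_succ_succ, show j+1+1 = (j+1)+1 from rfl, Function.iterate_succ_apply']
        have : s (s^[j+1] u) = Gf (2*q+2) (s^[j+1] u) + 1 := rfl
        omega
    have hdd : Gf (2*q+3) (2*t) ≤ Gf (2*q+4) t := by
      have := Gf_double (2*q+3) (t := t) (by omega)
      simpa using this
    have hunf : Gf (2*q+3) (2*t) = Gf (2*q+2) (s^[2*t-1] (2*t+1)) := by
      show Gf (2*q+2+1) (2*t) = _
      simp only [Gf, hs]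
    have hq2 : ack (q+1) (2*t-2) < s^[2*t-1] (2*t+1) := by
      have h := hQ (2*t-2) (2*t+1) (by omega)
      have he : 2*t - 1 = (2*t-2)+1 := by omega
      rw [he]
      exact h
    have hmono : ack (q+1) t ≤ ack (q+1) (2*t-2) := ack_mono_right _ (by omega)
    have hid : s^[2*t-1] (2*t+1) ≤ Gf (2*q+2) (s^[2*t-1] (2*t+1)) := le_Gf _ _
    have hgoal : 2*(q+1)+2 = 2*q+4 := by ring
    rw [hgoal]
    omega

section Struct

variable {θ : ℕ → ℕ → ℕ → Prop}

lemma minN_mem {X : Finset ℕ} (h : X.Nonempty) : minN X ∈ X := by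
  have : (X : Set ℕ).Nonempty := by exact_mod_cast h
  have := Nat.sInf_mem this
  exact_mod_cast this

lemma minN_le {X : Finset ℕ} {x : ℕ} (h : x ∈ X) : minN X ≤ x :=
  Nat.sInf_le (by exact_mod_cast h)

lemma le_maxN {X : Finset ℕ} {x : ℕ} (h : x ∈ X) : x ≤ maxN X :=
  Finset.le_sup (f := id) h

lemma maxN_mem {X : Finset ℕ} (h : X.Nonempty) : maxN X ∈ X := by
  obtain ⟨b, hb, he⟩ := Finset.exists_mem_eq_sup X h id
  rw [maxN, he]; exact hb

lemma maxN_mono {X Y : Finset ℕ} (h : X ⊆ Y) : maxN X ≤ maxN Y :=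
  Finset.sup_mono h

lemma minN_anti {X Y : Finset ℕ} (h : X ⊆ Y) (hX : X.Nonempty) : minN Y ≤ minN X :=
  minN_le (h (minN_mem hX))

lemma minN_eq {X : Finset ℕ} {m : ℕ} (hm : m ∈ X) (h : ∀ x ∈ X, m ≤ x) : minN X = m :=
  le_antisymm (minN_le hm) (h _ (minN_mem ⟨m, hm⟩))

lemma setBelow_shrink {E F E' F' : Finset ℕ} (h : SetBelow E F) (hE : E' ⊆ E) (hF : F' ⊆ F) :
    SetBelow E' F' := fun x hx y hy => h x (hE hx) y (hF hy)

lemma thetaApart_shrink {E F E' F' : Finset ℕ} (h : ThetaApart θ E F) (hE : E' ⊆ E)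
    (hF : F' ⊆ F) (hF' : F'.Nonempty) : ThetaApart θ E' F' := by
  intro x hx
  obtain ⟨y, hy, hz⟩ := h x (lt_of_lt_of_le hx (maxN_mono hE))
  exact ⟨y, lt_of_lt_of_le hy (minN_anti hF hF'), fun z hz' =>
    hz z (lt_of_lt_of_le hz' (maxN_mono hF))⟩

lemma largeStar_nonempty : ∀ {n} {X : Finset ℕ}, X ∈ LargeStar θ n → X.Nonempty
  | 0, _, h => h
  | _ + 1, _, h => h.1

lemma mulSeq_append (L : Set (Finset ℕ)) : ∀ (σ τ : List ℕ),
    MulSeq θ L (σ ++ τ) = MulSeq θ (MulSeq θ L σ) τ := by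
  intro σ
  induction σ generalizing L with
  | nil => intro τ; rfl
  | cons k σ ih => intro τ; exact ih (MulK θ L k) τ

lemma mulSeq_replicate_succ (L : Set (Finset ℕ)) (s m : ℕ) :
    MulSeq θ L (List.replicate (s+1) m) = MulK θ (MulSeq θ L (List.replicate s m)) m := by
  rw [List.replicate_succ', mulSeq_append]
  rfl

lemma exists_leaf {L : Set (Finset ℕ)} {m : ℕ} (hm : 0 < m) :
    ∀ (r : ℕ) {F : Finset ℕ}, F ∈ MulSeq θ L (List.replicate r m) → ∃ E ∈ L, E ⊆ F := by
  intro r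
  induction r generalizing L with
  | zero => intro F hF; exact ⟨F, hF, le_refl F⟩
  | succ r ih =>
    intro F hF
    rw [List.replicate_succ] at hF
    obtain ⟨E', hE'1, hE'2⟩ := ih (L := MulK θ L m) hF
    obtain ⟨X, hXL, hXs, _⟩ := hE'1
    exact ⟨X ⟨0, hm⟩, hXL _, (hXs _).trans hE'2⟩

/-- Growth lemma: `ω^r`-large* sets grow like `Gf r`. -/
lemma growth : ∀ r {X : Finset ℕ}, X ∈ LargeStar θ r → 3 ≤ minN X → Gf r (minN X) ≤ maxN X := by
  intro r
  induction r with
  | zero =>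
    intro X hX _
    exact le_maxN (minN_mem hX)
  | succ r ih =>
    intro X hX hm
    set a := minN X with ha
    have ha3 : 3 ≤ a := hm
    obtain ⟨hne, hmem⟩ := hX
    rw [mulSeq_replicate_succ] at hmem
    obtain ⟨D, hDP, hDsub, hDord⟩ := hmem
    have hW : ∀ i : Fin a, ∃ E ∈ LargeStar θ r, E ⊆ D i := fun i =>
      exists_leaf (by omega) r (hDP i)
    choose W hWL hWD using hW
    have hWne : ∀ i, (W i).Nonempty := fun i => largeStar_nonempty (hWL i)
    have hWX : ∀ i, W i ⊆ X.erase a := fun i => (hWD i).trans (hDsub i)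
    have hWgt : ∀ i, ∀ y ∈ W i, a + 1 ≤ y := by
      intro i y hy
      have h1 := hWX i hy
      have h2 : y ∈ X := Finset.mem_of_mem_erase h1
      have h3 : y ≠ a := Finset.ne_of_mem_erase h1
      have := minN_le h2
      omega
    have hW3 : ∀ i, 3 ≤ minN (W i) := by
      intro i
      have := hWgt i _ (minN_mem (hWne i))
      omega
    set stepf : ℕ → ℕ := fun t => Gf r t + 1 with hstepf
    have hstepmono : Monotone stepf := fun x y h => by simp [hstepf, Gf_mono r h]
    have key : ∀ j (hj : j < a), stepf^[j] (a+1) ≤ minN (W ⟨j, hj⟩) := by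
      intro j
      induction j with
      | zero => intro hj; simpa using hWgt _ _ (minN_mem (hWne _))
      | succ j ihj =>
        intro hj
        have hj' : j < a := by omega
        have h1 : stepf^[j] (a+1) ≤ minN (W ⟨j, hj'⟩) := ihj hj'
        have h2 : Gf r (minN (W ⟨j, hj'⟩)) ≤ maxN (W ⟨j, hj'⟩) := ih (hWL _) (hW3 _)
        have h3 : maxN (W ⟨j, hj'⟩) < minN (W ⟨j+1, hj⟩) := by
          have hord := (hDord ⟨j, hj'⟩ ⟨j+1, hj⟩ (by simp)).1
          exact setBelow_shrink hord (hWD _) (hWD _) _ (maxN_mem (hWne _)) _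
            (minN_mem (hWne _))
        have h4 : stepf (stepf^[j] (a+1)) ≤ stepf (minN (W ⟨j, hj'⟩)) := hstepmono h1
        rw [Function.iterate_succ_apply']
        have h5 : stepf (minN (W ⟨j, hj'⟩)) = Gf r (minN (W ⟨j, hj'⟩)) + 1 := rfl
        omega
    have hlast : a - 1 < a := by omega
    have h1 : stepf^[a-1] (a+1) ≤ minN (W ⟨a-1, hlast⟩) := key _ hlast
    have h2 : Gf r (minN (W ⟨a-1, hlast⟩)) ≤ maxN (W ⟨a-1, hlast⟩) := ih (hWL _) (hW3 _)
    have h3 : maxN (W ⟨a-1, hlast⟩) ≤ maxN X :=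
      maxN_mono ((hWX _).trans (Finset.erase_subset _ _))
    have h4 : Gf (r+1) a = Gf r (stepf^[a-1] (a+1)) := rfl
    have h5 : Gf r (stepf^[a-1] (a+1)) ≤ Gf r (minN (W ⟨a-1, hlast⟩)) := Gf_mono r h1
    omega

end Struct

section StepLemma

variable {θ : ℕ → ℕ → ℕ → Prop}

lemma step_lemma (h : ℕ → ℕ) (hmono : Monotone h) (hlt : ∀ t, t < h t)
    (M T : Set (Finset ℕ)) (m : ℕ) (hm1 : 1 ≤ m)
    (cap : ∀ B ∈ M, ∀ b, 3 ≤ b → (∀ y ∈ B, b < y) →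
      ∃ Z, Z ⊆ B ∧ Z.Nonempty ∧ Z ∈ T ∧ (∀ y ∈ Z, h b < y) ∧ GSparse h Z) :
    ∀ s (F : Finset ℕ) (b : ℕ), F ∈ MulSeq θ M (List.replicate s m) → 3 ≤ b →
      (∀ y ∈ F, b < y) →
      ∃ F', F' ⊆ F ∧ F'.Nonempty ∧ F' ∈ MulSeq θ T (List.replicate s m) ∧
        (∀ y ∈ F', h b < y) ∧ GSparse h F' := by
  intro s
  induction s with
  | zero => exact fun F b hF hb hby => cap F hF b hb hby
  | succ s ih =>
    intro F b hF hb hby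
    rw [mulSeq_replicate_succ] at hF
    obtain ⟨D, hDP, hDsub, hDord⟩ := hF
    -- build blocks sequentially
    have claim : ∀ j (hj : j ≤ m), ∃ Z : Fin j → Finset ℕ,
        (∀ i : Fin j, Z i ⊆ D (Fin.castLE hj i)) ∧
        (∀ i, (Z i).Nonempty) ∧
        (∀ i, Z i ∈ MulSeq θ T (List.replicate s m)) ∧
        (∀ i, ∀ y ∈ Z i, h b < y) ∧
        (∀ i, GSparse h (Z i)) ∧
        (∀ i i' : Fin j, i < i' → ∀ x ∈ Z i, ∀ y ∈ Z i', x < y ∧ h x < y) := by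
      intro j
      induction j with
      | zero => exact fun _ => ⟨Fin.elim0, fun i => i.elim0, fun i => i.elim0, fun i => i.elim0,
          fun i => i.elim0, fun i => i.elim0, fun i => i.elim0⟩
      | succ j ihj =>
        intro hj
        have hj' : j ≤ m := by omega
        obtain ⟨Z, hZD, hZne, hZT, hZb, hZsp, hZcross⟩ := ihj hj'
        -- bound for the new block
        rcases Nat.eq_zero_or_pos j with hj0 | hjpos
        · -- first block: use bound b
          subst hj0
          have hD0 : ∀ y ∈ D (Fin.castLE hj 0), b < y := fun y hy => hby y (hDsub _ hy)
          obtain ⟨W, hW1, hW2, hW3, hW4, hW5⟩ := ih (D (Fin.castLE hj 0)) b (hDP _) hb hD0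
          refine ⟨fun _ => W, fun i => ?_, fun _ => hW2, fun _ => hW3, fun _ => hW4,
            fun _ => hW5, fun i i' hii' => absurd hii' (by omega)⟩
          · have : i = 0 := by omega
            subst this; exact hW1
        · -- later blocks: bound is the max of the previous block
          have hjlt : j - 1 < j := by omega
          set l : Fin j := ⟨j - 1, hjlt⟩ with hl
          set bc : ℕ := maxN (Z l) with hbc
          have hbcZ : bc ∈ Z l := maxN_mem (hZne l)
          have hbcb : h b < bc := hZb l _ hbcZ
          have hbc3 : 3 ≤ bc := by have := hlt b; omega
          have hDj : ∀ y ∈ D (Fin.castLE hj (Fin.last j)), bc < y := by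
            intro y hy
            have hord := (hDord (Fin.castLE hj' l) (Fin.castLE hj (Fin.last j))
              (by simp [Fin.lt_def, hl]; omega)).1
            exact hord bc (hZD l hbcZ) y hy
          obtain ⟨W, hW1, hW2, hW3, hW4, hW5⟩ :=
            ih (D (Fin.castLE hj (Fin.last j))) bc (hDP _) hbc3 hDj
          refine ⟨Fin.snoc Z W, ?_, ?_, ?_, ?_, ?_, ?_⟩
          · intro i
            refine Fin.lastCases ?_ ?_ i
            · rw [Fin.snoc_last]
              exact hW1
            · intro i'
              rw [Fin.snoc_castSucc]
              have : Fin.castLE hj (Fin.castSucc i') = Fin.castLE hj' i' := by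
                apply Fin.ext; simp
              rw [this]
              exact hZD i'
          · intro i
            refine Fin.lastCases ?_ ?_ i
            · rw [Fin.snoc_last]; exact hW2
            · intro i'; rw [Fin.snoc_castSucc]; exact hZne i'
          · intro i
            refine Fin.lastCases ?_ ?_ i
            · rw [Fin.snoc_last]; exact hW3
            · intro i'; rw [Fin.snoc_castSucc]; exact hZT i'
          · intro i
            refine Fin.lastCases ?_ ?_ i
            · rw [Fin.snoc_last]
              intro y hy
              have := hW4 y hy
              have := hlt bc
              have : h b < bc := hbcb
              calc h b < bc := hbcb
              _ < h bc := hlt bc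
              _ < y := hW4 y hy
            · intro i'; rw [Fin.snoc_castSucc]; exact hZb i'
          · intro i
            refine Fin.lastCases ?_ ?_ i
            · rw [Fin.snoc_last]; exact hW5
            · intro i'; rw [Fin.snoc_castSucc]; exact hZsp i'
          · have hsnoc : ∀ (i : Fin (j+1)) (hlt' : (i : ℕ) < j),
                (Fin.snoc Z W : Fin (j+1) → Finset ℕ) i = Z ⟨(i : ℕ), hlt'⟩ := by
              intro i hlt'
              have he : (⟨(i : ℕ), hlt'⟩ : Fin j).castSucc = i := by apply Fin.ext; simp
              conv_lhs => rw [← he]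
              rw [Fin.snoc_castSucc]
            have hle_bc : ∀ (i0 : Fin j), ∀ x ∈ Z i0, x ≤ bc := by
              intro i0 x hx
              rcases eq_or_lt_of_le (show (i0 : ℕ) ≤ j - 1 by omega) with he | hlt'
              · have : i0 = l := by apply Fin.ext; simpa [hl] using he
                subst this
                exact le_maxN hx
              · have hll : i0 < l := Fin.lt_def.mpr hlt'
                exact le_of_lt (hZcross i0 l hll x hx bc hbcZ).1
            intro i i'
            refine Fin.lastCases ?_ ?_ i'
            · intro hii' x hx y hy
              rw [Fin.snoc_last] at hy
              have hiv : (i : ℕ) < j := hii'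
              rw [hsnoc i hiv] at hx
              have h1 : x ≤ bc := hle_bc _ x hx
              have h2 : h bc < y := hW4 y hy
              have h3 : h x ≤ h bc := hmono h1
              have := hlt bc
              exact ⟨by omega, by omega⟩
            · intro i'' hii' x hx y hy
              have hiv' : ((Fin.castSucc i'' : Fin (j+1)) : ℕ) < j := i''.isLt
              have hiv : (i : ℕ) < j := by
                have := hii'
                simp [Fin.lt_def] at this
                omega
              rw [hsnoc i hiv] at hx
              rw [Fin.snoc_castSucc] at hy
              refine hZcross ⟨(i : ℕ), hiv⟩ i'' ?_ x hx y hy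
              simpa [Fin.lt_def] using hii'
    obtain ⟨Z, hZD, hZne, hZT, hZb, hZsp, hZcross⟩ := claim m (le_refl m)
    classical
    set F' : Finset ℕ := Finset.univ.biUnion (fun i : Fin m => Z i) with hF'
    have hZF' : ∀ i, Z i ⊆ F' := by
      intro i x hx
      rw [hF', Finset.mem_biUnion]
      exact ⟨i, Finset.mem_univ i, hx⟩
    have hmemF' : ∀ x ∈ F', ∃ i, x ∈ Z i := by
      intro x hx
      rw [hF', Finset.mem_biUnion] at hx
      obtain ⟨i, _, hi⟩ := hx
      exact ⟨i, hi⟩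
    have hDid : ∀ i : Fin m, Fin.castLE (le_refl m) i = i := fun i => Fin.ext rfl
    refine ⟨F', ?_, ?_, ?_, ?_, ?_⟩
    · intro x hx
      obtain ⟨i, hi⟩ := hmemF' x hx
      exact hDsub (Fin.castLE (le_refl m) i) (hZD i hi)
    · obtain ⟨x, hx⟩ := hZne ⟨0, hm1⟩
      exact ⟨x, hZF' _ hx⟩
    · rw [mulSeq_replicate_succ]
      refine ⟨Z, hZT, hZF', ?_⟩
      intro i i' hii'
      have hsb : SetBelow (Z i) (Z i') := fun x hx y hy => (hZcross i i' hii' x hx y hy).1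
      have hord := hDord (Fin.castLE (le_refl m) i) (Fin.castLE (le_refl m) i')
        (by exact hii')
      exact ⟨hsb, thetaApart_shrink hord.2 (hZD i) (hZD i') (hZne i')⟩
    · intro y hy
      obtain ⟨i, hi⟩ := hmemF' y hy
      exact hZb i y hi
    · intro x hx y hy hxy
      obtain ⟨i, hi⟩ := hmemF' x hx
      obtain ⟨i', hi'⟩ := hmemF' y hy
      rcases lt_trichotomy i i' with hlt' | heq | hgt
      · exact (hZcross i i' hlt' x hi y hi').2
      · subst heq
        exact hZsp i x hi y hi' hxy
      · have := (hZcross i' i hgt y hi' x hi).1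
        omega

end StepLemma

section Main

variable {θ : ℕ → ℕ → ℕ → Prop}

lemma main_extract (θ : ℕ → ℕ → ℕ → Prop) (K : ℕ) :
    ∀ n (X : Finset ℕ), 3 ≤ minN X → X ∈ LargeStar θ (n + (2*K+2)) →
      ∃ Y, Y ⊆ X ∧ Y ∈ LargeStar θ n ∧ GSparse (ack K) Y := by
  intro n
  induction n with
  | zero =>
    intro X hm hX
    have hne : X.Nonempty := largeStar_nonempty hX
    refine ⟨{minN X}, by simp [minN_mem hne], Finset.singleton_nonempty _, ?_⟩
    intro x hx y hy hxy
    simp only [Finset.mem_singleton] at hx hy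
    omega
  | succ n ih =>
    intro X hm hX
    set m := minN X with hmdef
    rw [show n+1+(2*K+2) = (n+(2*K+2))+1 by omega] at hX
    obtain ⟨hne, hmem⟩ := hX
    have hsplit : List.replicate ((n+(2*K+2))+1) m
        = List.replicate (2*K+2) m ++ List.replicate (n+1) m := by
      rw [← List.replicate_add]; congr 1; omega
    rw [hsplit, mulSeq_append] at hmem
    have herase_gt : ∀ y ∈ X.erase m, m < y := by
      intro y hy
      have h1 : y ∈ X := Finset.mem_of_mem_erase hy
      have h2 : y ≠ m := Finset.ne_of_mem_erase hy
      have := minN_le h1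
      omega
    -- the capability of M-blocks: extract sparse ω^n-large* subsets starting high
    have cap : ∀ B ∈ MulSeq θ (LargeStar θ (n+(2*K+2))) (List.replicate (2*K+2) m),
        ∀ b, 3 ≤ b → (∀ y ∈ B, b < y) →
        ∃ Z, Z ⊆ B ∧ Z.Nonempty ∧ Z ∈ LargeStar θ n ∧ (∀ y ∈ Z, ack K b < y) ∧
          GSparse (ack K) Z := by
      intro B hB b hb hby
      have hB' : B ∈ MulK θ (MulSeq θ (LargeStar θ (n+(2*K+2)))
          (List.replicate (2*K+1) m)) m := by
        rw [← mulSeq_replicate_succ]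
        exact hB
      obtain ⟨E, hEP, hEsub, hEord⟩ := hB'
      have hm0 : (0:ℕ) < m := by omega
      have hm3 : 3 ≤ m := hm
      obtain ⟨V1, hV1L, hV1E⟩ := exists_leaf hm0 (2*K+1) (hEP ⟨0, by omega⟩)
      obtain ⟨V2, hV2L, hV2E⟩ := exists_leaf hm0 (2*K+1) (hEP ⟨1, by omega⟩)
      have hV1ne : V1.Nonempty := largeStar_nonempty hV1L
      have hV2ne : V2.Nonempty := largeStar_nonempty hV2L
      have hminV1 : b < minN V1 := hby _ (hEsub _ (hV1E (minN_mem hV1ne)))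
      have h3V1 : 3 ≤ minN V1 := by omega
      have hg1 : Gf (n+(2*K+2)) (minN V1) ≤ maxN V1 := growth _ hV1L h3V1
      have hbelow : maxN V1 < minN V2 :=
        (hEord ⟨0, by omega⟩ ⟨1, by omega⟩ (by simp [Fin.lt_def])).1 _
          (hV1E (maxN_mem hV1ne)) _ (hV2E (minN_mem hV2ne))
      have hGmono : Gf (2*K+2) (b+1) ≤ Gf (2*K+2) (minN V1) := Gf_mono _ (by omega)
      have hGlvl : Gf (2*K+2) (minN V1) ≤ Gf (n+(2*K+2)) (minN V1) :=
        Gf_level_mono (by omega) _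
      have hack : ack K (b+1) < Gf (2*K+2) (b+1) := ack_lt_Gf K (b+1) (by omega)
      have hackb : ack K b < ack K (b+1) := ack_strictMono_right K (by omega)
      have hminmax : minN V1 ≤ maxN V1 := le_maxN (minN_mem hV1ne)
      have h3V2 : 3 ≤ minN V2 := by omega
      obtain ⟨Z, hZV2, hZL, hZsp⟩ := ih V2 h3V2 hV2L
      have hZne : Z.Nonempty := largeStar_nonempty hZL
      refine ⟨Z, hZV2.trans (hV2E.trans (hEsub _)), hZne, hZL, ?_, hZsp⟩
      intro y hy
      have hy1 : minN V2 ≤ minN Z := minN_anti hZV2 hZne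
      have hy2 : minN Z ≤ y := minN_le hy
      omega
    obtain ⟨Y', hY'sub, hY'ne, hY'mem, hY'b, hY'sp⟩ :=
      step_lemma (ack K) (ack_mono_right K) (fun t => lt_ack_right K t) _ (LargeStar θ n) m
        (by omega) cap (n+1) (X.erase m) m hmem hm herase_gt
    have hackm : m < ack K m := lt_ack_right K m
    have hmY' : m ∉ Y' := fun hmm => by have := hY'b m hmm; omega
    have hYX : insert m Y' ⊆ X := by
      apply Finset.insert_subset (minN_mem hne)
      exact hY'sub.trans (Finset.erase_subset _ _)
    have hYmin : minN (insert m Y') = m := by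
      apply minN_eq (Finset.mem_insert_self _ _)
      intro x hx
      rcases Finset.mem_insert.mp hx with rfl | hx'
      · exact le_refl _
      · have := hY'b x hx'; omega
    refine ⟨insert m Y', hYX, ?_, ?_⟩
    · refine ⟨Finset.insert_nonempty _ _, ?_⟩
      rw [hYmin, Finset.erase_insert hmY']
      exact hY'mem
    · intro x hx y hy hxy
      rcases Finset.mem_insert.mp hx with rfl | hx'
      · rcases Finset.mem_insert.mp hy with rfl | hy'
        · omega
        · exact hY'b y hy'
      · rcases Finset.mem_insert.mp hy with rfl | hy'
        · have := hY'b x hx'; omega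
        · exact hY'sp x hx' y hy' hxy

end Main

/-- extraction of a g-sparse large subset for primitive recursive g. -/
theorem stmt_8 (θ : ℕ → ℕ → ℕ → Prop) (g : ℕ → ℕ) (hg : Nat.Primrec g) :
    ∃ k : ℕ, ∀ n : ℕ, ∀ X : Finset ℕ, 3 ≤ minN X → X ∈ LargeStar θ (n + k) →
      ∃ Y ⊆ X, Y ∈ LargeStar θ n ∧ GSparse g Y := by
  obtain ⟨K, hK⟩ := exists_lt_ack_of_nat_primrec hg
  refine ⟨2*K+2, fun n X hmin hX => ?_⟩
  obtain ⟨Y, hYX, hYL, hYsp⟩ := main_extract θ K n X hmin hX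
  refine ⟨Y, hYX, hYL, fun x hx y hy hxy => ?_⟩
  have h1 := hYsp x hx y hy hxy
  have h2 := hK x
  omega
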